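/- Let s ∈ (0,1), n ≥ 1, and V ∈ C(ℝⁿ, ℝ) with V(0) = 0 and V(q) < 0 for all q ≠ 0. Suppose q : ℝ → ℝⁿ is bounded, uniformly continuous, and the energy I(q) := (1/2)[q]_s² − ∫_ℝ V(q(x)) dx is finite. Then q(x) → 0 as x → ±∞. -/

import Mathlib

open MeasureTheory ENNReal Filter Topology

/-- The squared Gagliardo double integral of `q : ℝ → ℝⁿ` (without the constant `c_s`). -/
noncomputable def gagliardoN (n : ℕ) (s : ℝ) (q : ℝ → EuclideanSpace ℝ (Fin n)) : ℝ≥0∞ :=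
  ∫⁻ p : ℝ × ℝ, ENNReal.ofReal (‖q p.1 - q p.2‖ ^ 2 / |p.1 - p.2| ^ (1 + 2 * s))

/-- Auxiliary lemma: the one-sided (atTop) decay. -/
lemma decay_aux
    (n : ℕ)
    (V : EuclideanSpace ℝ (Fin n) → ℝ) (hVcont : Continuous V)
    (hVneg : ∀ p : EuclideanSpace ℝ (Fin n), p ≠ 0 → V p < 0)
    (q : ℝ → EuclideanSpace ℝ (Fin n))
    (hbdd : ∃ C : ℝ, ∀ x : ℝ, ‖q x‖ ≤ C)
    (hUC : UniformContinuous q)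
    (hVint : Integrable (fun x : ℝ => V (q x))) :
    Tendsto q atTop (𝓝 0) := by
  obtain ⟨C, hC⟩ := hbdd
  by_contra hcon
  rw [Metric.tendsto_nhds] at hcon
  push_neg at hcon
  obtain ⟨ε, hε, hfe⟩ := hcon
  have hfreq : ∃ᶠ x in atTop, ε ≤ ‖q x‖ := by
    refine hfe.mono fun x hx => ?_
    rw [dist_zero_right] at hx
    exact hx
  -- compact annulus
  set K : Set (EuclideanSpace ℝ (Fin n)) :=
    Metric.closedBall 0 C \ Metric.ball 0 (ε / 2) with hKdef
  have hmemK : ∀ p : EuclideanSpace ℝ (Fin n), ε / 2 ≤ ‖p‖ → ‖p‖ ≤ C → p ∈ K := by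
    intro p h1 h2
    refine ⟨Metric.mem_closedBall.mpr ?_, fun hp => ?_⟩
    · rwa [dist_zero_right]
    · rw [Metric.mem_ball, dist_zero_right] at hp
      exact absurd h1 (not_le.mpr hp)
  have hKc : IsCompact K := (isCompact_closedBall 0 C).diff Metric.isOpen_ball
  obtain ⟨x₀, -, hx₀⟩ := frequently_atTop.mp hfreq 0
  have hKne : K.Nonempty :=
    ⟨q x₀, hmemK _ (le_trans (by linarith) hx₀) (hC x₀)⟩
  obtain ⟨p₀, hp₀K, hp₀max⟩ := hKc.exists_isMaxOn hKne hVcont.continuousOn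
  have hp₀norm : ε / 2 ≤ ‖p₀‖ := by
    by_contra h
    apply hp₀K.2
    rw [Metric.mem_ball, dist_zero_right]
    exact not_le.mp h
  have hp₀ne : p₀ ≠ 0 := by
    intro h
    rw [h, norm_zero] at hp₀norm
    linarith
  set m : ℝ := -V p₀ with hmdef
  have hm : 0 < m := by
    have := hVneg p₀ hp₀ne
    simp only [hmdef]; linarith
  -- uniform continuity
  rw [Metric.uniformContinuous_iff] at hUC
  obtain ⟨δ, hδ, hqδ⟩ := hUC (ε / 2) (by linarith)
  set δ' : ℝ := δ / 2 with hδ'def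
  have hδ' : 0 < δ' := by positivity
  -- if ε ≤ ‖q c‖ then on Icc (c-δ') (c+δ') we have m ≤ -V (q x)
  have hIcc : ∀ c : ℝ, ε ≤ ‖q c‖ → ∀ x ∈ Set.Icc (c - δ') (c + δ'),
      m ≤ -V (q x) := by
    intro c hc x hx
    have hdist : dist x c < δ := by
      rw [Real.dist_eq]
      rcases hx with ⟨h1, h2⟩
      rw [abs_lt]
      constructor <;> [linarith; linarith]
    have h1 : dist (q x) (q c) < ε / 2 := hqδ hdist
    have h2 : ε / 2 ≤ ‖q x‖ := by
      have := norm_sub_norm_le (q c) (q x)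
      rw [← dist_eq_norm] at this
      rw [dist_comm] at h1
      linarith
    have hxK : q x ∈ K := hmemK _ h2 (hC x)
    have hmin := hp₀max hxK
    simp only [Set.mem_setOf_eq] at hmin
    simp only [hmdef]
    linarith
  -- construct infinitely many disjoint intervals
  have hsel : ∀ b : ℝ, ∃ x, b ≤ x ∧ ε ≤ ‖q x‖ := fun b => by
    obtain ⟨x, hx1, hx2⟩ := frequently_atTop.mp hfreq b
    exact ⟨x, hx1, hx2⟩
  choose f hf1 hf2 using hsel
  set u : ℕ → ℝ := fun k => (fun x => f (x + 2 * δ' + 1))^[k] (f 0) with hudef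
  have hu0 : ε ≤ ‖q (u 0)‖ := hf2 0
  have hustep : ∀ k, u k + 2 * δ' + 1 ≤ u (k + 1) := by
    intro k
    have : u (k + 1) = f (u k + 2 * δ' + 1) := by
      simp only [hudef, Function.iterate_succ_apply']
    rw [this]
    exact hf1 _
  have huq : ∀ k, ε ≤ ‖q (u k)‖ := by
    intro k
    cases k with
    | zero => exact hu0
    | succ k =>
      have : u (k + 1) = f (u k + 2 * δ' + 1) := by
        simp only [hudef, Function.iterate_succ_apply']
      rw [this]; exact hf2 _
  have humono : Monotone u := monotone_nat_of_le_succ fun k => by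
    have := hustep k; linarith
  have hugap : ∀ i j : ℕ, i < j → u i + 2 * δ' + 1 ≤ u j := by
    intro i j hij
    calc u i + 2 * δ' + 1 ≤ u (i + 1) := hustep i
      _ ≤ u j := humono hij
  set I : ℕ → Set ℝ := fun k => Set.Icc (u k - δ') (u k + δ') with hIdef
  have hdisj : Pairwise (Function.onFun Disjoint I) := by
    intro i j hij
    have key : ∀ a b : ℕ, a < b → Disjoint (I a) (I b) := by
      intro a b hab
      rw [Set.disjoint_left]
      rintro x ⟨-, hx2⟩ ⟨hx3, -⟩
      have := hugap a b hab
      linarith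
    rcases hij.lt_or_gt with h | h
    · exact key i j h
    · exact (key j i h).symm
  have hsub : (⋃ k, I k) ⊆ {x : ℝ | m ≤ -V (q x)} := by
    rintro x hx
    obtain ⟨k, hk⟩ := Set.mem_iUnion.mp hx
    exact hIcc (u k) (huq k) x hk
  have hfin : volume {x : ℝ | m ≤ -V (q x)} < ⊤ :=
    (hVint.neg).measure_ge_lt_top hm
  have htop : volume (⋃ k, I k) = ⊤ := by
    rw [measure_iUnion hdisj fun k => measurableSet_Icc]
    have hvol : ∀ k, volume (I k) = ENNReal.ofReal (2 * δ') := by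
      intro k
      rw [hIdef]
      simp only [Real.volume_Icc]
      ring_nf
    simp only [hvol]
    exact ENNReal.tsum_const_eq_top_of_ne_zero (by
      simp only [ne_eq, ENNReal.ofReal_eq_zero, not_le]; linarith)
  have hle : volume (⋃ k, I k) ≤ volume {x : ℝ | m ≤ -V (q x)} :=
    measure_mono hsub
  rw [htop, top_le_iff] at hle
  exact hfin.ne hle

/-- if `V` is continuous with `V(0) = 0` and `V < 0` away from `0`, and
`q` is bounded, uniformly continuous and has finite energy
`I(q) = (1/2)[q]_s² − ∫ V(q)` (i.e. the Gagliardo seminorm is finite and `V ∘ q` is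
integrable), then `q(x) → 0` as `x → ±∞`. -/
theorem decay_at_infinity
    (n : ℕ) (hn : 1 ≤ n) (s : ℝ) (hs : s ∈ Set.Ioo (0:ℝ) 1)
    (V : EuclideanSpace ℝ (Fin n) → ℝ) (hVcont : Continuous V) (hV0 : V 0 = 0)
    (hVneg : ∀ p : EuclideanSpace ℝ (Fin n), p ≠ 0 → V p < 0)
    (q : ℝ → EuclideanSpace ℝ (Fin n))
    (hbdd : ∃ C : ℝ, ∀ x : ℝ, ‖q x‖ ≤ C)
    (hUC : UniformContinuous q)
    (hgag : gagliardoN n s q ≠ ⊤)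
    (hVint : Integrable (fun x : ℝ => V (q x))) :
    Tendsto q atTop (𝓝 0) ∧ Tendsto q atBot (𝓝 0) := by
  constructor
  · exact decay_aux n V hVcont hVneg q hbdd hUC hVint
  · have h1 : Tendsto (fun x : ℝ => q (-x)) atTop (𝓝 0) := by
      apply decay_aux n V hVcont hVneg (fun x => q (-x))
      · obtain ⟨C, hC⟩ := hbdd
        exact ⟨C, fun x => hC (-x)⟩
      · exact hUC.comp uniformContinuous_neg
      · exact hVint.comp_neg
    have h2 := h1.comp tendsto_neg_atBot_atTop
    have h3 : ((fun x : ℝ => q (-x)) ∘ Neg.neg) = q := by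
      funext x; simp
    rwa [h3] at h2
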